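/- arXiv:math/0408005 — 5 statements merged into one kernel-verified Lean document; each statement's English description precedes it below -/
import Mathlib

section
/- Let e¹, e², ν¹, ν² be a basis of the dual space of ℝ⁴ and fix i ∈ {1,2}. Let A¹_{jl}, A²_{jl} (j, l ∈ {1,2}) be real numbers with A^k_{jl} = A^k_{lj}. Define covectors De¹ = −A¹_{i1}ν¹ − A²_{i1}ν², De² = −A¹_{i2}ν¹ − A²_{i2}ν², Dν¹ = A¹_{i1}e¹ + A¹_{i2}e², Dν² = A²_{i1}e¹ + A²_{i2}e², and set ω¹ = e¹∧e² − ν¹∧ν², ω² = e¹∧ν¹ − ν²∧e², ω³ = e¹∧ν² − e²∧ν¹ in the second exterior power of the dual of ℝ⁴. Then the Leibniz expansions satisfy: (1) De¹∧e² + e¹∧De² − Dν¹∧ν² − ν¹∧Dν² = (A²_{i1} − A¹_{i2}) ω² + (−A¹_{i1} − A²_{i2}) ω³; (2) De¹∧ν¹ + e¹∧Dν¹ − Dν²∧e² − ν²∧De² = (A¹_{i2} − A²_{i1}) ω¹; (3) De¹∧ν² + e¹∧Dν² − De²∧ν¹ − e²∧Dν¹ = (A²_{i2} + A¹_{i1})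 ω¹. (These are the formulas for the covariant derivatives ∇_{e_i}ω¹, ∇_{e_i}ω², ∇_{e_i}ω³ of the anti-self-dual basis 2-forms along a surface M² ⊂ ℝ⁴.) -/
noncomputable section

/-- The dual space of `ℝ⁴`. -/
abbrev DualR4 := Module.Dual ℝ (Fin 4 → ℝ)

/-- Wedge product of two covectors, as a degree-2 element of the exterior
algebra of the dual of `ℝ⁴`. -/
def wedge (x y : DualR4) : ExteriorAlgebra ℝ DualR4 :=
  ExteriorAlgebra.ι ℝ x * ExteriorAlgebra.ι ℝ y

/-- `De¹ = −A¹_{i1}ν¹ − A²_{i1}ν²`. -/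
def De1 (n1 n2 : DualR4) (i : Fin 2) (A1 A2 : Matrix (Fin 2) (Fin 2) ℝ) : DualR4 :=
  (-(A1 i 0)) • n1 + (-(A2 i 0)) • n2

/-- `De² = −A¹_{i2}ν¹ − A²_{i2}ν²`. -/
def De2 (n1 n2 : DualR4) (i : Fin 2) (A1 A2 : Matrix (Fin 2) (Fin 2) ℝ) : DualR4 :=
  (-(A1 i 1)) • n1 + (-(A2 i 1)) • n2

/-- `Dν¹ = A¹_{i1}e¹ + A¹_{i2}e²`. -/
def Dn1 (e1 e2 : DualR4) (i : Fin 2) (A1 : Matrix (Fin 2) (Fin 2) ℝ) : DualR4 :=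
  A1 i 0 • e1 + A1 i 1 • e2

/-- `Dν² = A²_{i1}e¹ + A²_{i2}e²`. -/
def Dn2 (e1 e2 : DualR4) (i : Fin 2) (A2 : Matrix (Fin 2) (Fin 2) ℝ) : DualR4 :=
  A2 i 0 • e1 + A2 i 1 • e2

/-- `ω¹ = e¹∧e² − ν¹∧ν²`. -/
def om1 (e1 e2 n1 n2 : DualR4) : ExteriorAlgebra ℝ DualR4 :=
  wedge e1 e2 - wedge n1 n2

/-- `ω² = e¹∧ν¹ − ν²∧e²`. -/
def om2 (e1 e2 n1 n2 : DualR4) : ExteriorAlgebra ℝ DualR4 :=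
  wedge e1 n1 - wedge n2 e2

/-- `ω³ = e¹∧ν² − e²∧ν¹`. -/
def om3 (e1 e2 n1 n2 : DualR4) : ExteriorAlgebra ℝ DualR4 :=
  wedge e1 n2 - wedge e2 n1

set_option synthInstance.maxHeartbeats 400000

lemma wedge_add_left (x y z : DualR4) : wedge (x + y) z = wedge x z + wedge y z := by
  simp [wedge, add_mul]

lemma wedge_add_right (x y z : DualR4) : wedge x (y + z) = wedge x y + wedge x z := by
  simp [wedge, mul_add]

lemma wedge_smul_left (c : ℝ) (x z : DualR4) : wedge (c • x) z = c • wedge x z := by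
  simp [wedge, smul_mul_assoc]

lemma wedge_smul_right (c : ℝ) (x z : DualR4) : wedge x (c • z) = c • wedge x z := by
  simp [wedge, mul_smul_comm]

lemma wedge_self (x : DualR4) : wedge x x = (0 : ExteriorAlgebra ℝ DualR4) := by
  simp [wedge, ExteriorAlgebra.ι_sq_zero]

lemma wedge_anticomm (x y : DualR4) : wedge y x = -wedge x y := by
  have h := ExteriorAlgebra.ι_add_mul_swap (R := ℝ) x y
  unfold wedge
  rw [eq_neg_iff_add_eq_zero, add_comm]
  exact h

set_option maxHeartbeats 1000000 in
/-- the formulas for the covariant derivatives `∇_{e_i}ω¹, ∇_{e_i}ω², ∇_{e_i}ω³`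
of the anti-self-dual basis 2-forms along a surface `M² ⊂ ℝ⁴`, expressed via the
Leibniz expansions of the wedge products of the adapted coframe. -/
theorem stmt2 (e1 e2 n1 n2 : DualR4)
    (hbasis : LinearIndependent ℝ ![e1, e2, n1, n2] ∧
      Submodule.span ℝ ({e1, e2, n1, n2} : Set DualR4) = ⊤)
    (i : Fin 2) (A1 A2 : Matrix (Fin 2) (Fin 2) ℝ)
    (hA1 : A1.IsSymm) (hA2 : A2.IsSymm) :
    (wedge (De1 n1 n2 i A1 A2) e2 + wedge e1 (De2 n1 n2 i A1 A2)
        - wedge (Dn1 e1 e2 i A1) n2 - wedge n1 (Dn2 e1 e2 i A2)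
      = (A2 i 0 - A1 i 1) • om2 e1 e2 n1 n2 + (-(A1 i 0) - A2 i 1) • om3 e1 e2 n1 n2) ∧
    (wedge (De1 n1 n2 i A1 A2) n1 + wedge e1 (Dn1 e1 e2 i A1)
        - wedge (Dn2 e1 e2 i A2) e2 - wedge n2 (De2 n1 n2 i A1 A2)
      = (A1 i 1 - A2 i 0) • om1 e1 e2 n1 n2) ∧
    (wedge (De1 n1 n2 i A1 A2) n2 + wedge e1 (Dn2 e1 e2 i A2)
        - wedge (De2 n1 n2 i A1 A2) n1 - wedge e2 (Dn1 e1 e2 i A1)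
      = (A2 i 1 + A1 i 0) • om1 e1 e2 n1 n2) := by
  refine ⟨?_, ?_, ?_⟩ <;>
  · simp only [De1, De2, Dn1, Dn2, om1, om2, om3, wedge_add_left, wedge_add_right,
      wedge_smul_left, wedge_smul_right, wedge_self, smul_zero, smul_sub, smul_add,
      smul_smul, wedge_anticomm n1 e1, wedge_anticomm n1 e2, wedge_anticomm n2 e1,
      wedge_anticomm n2 e2, wedge_anticomm n2 n1, wedge_anticomm e2 e1, smul_neg]
    module
end
end

section
/- Let A and B be symmetric real 2×2 matrices satisfying B = −J A (that is, B₁₁ = A₁₂, B₁₂ = A₂₂ = −A₁₁, B₂₂ = −A₁₂), where J = ((0, −1), (1, 0)). If A and B commute (equivalently, are simultaneously diagonalizable), then A = B = 0. (Hence if the second fundamental forms A^ν and A^{ν⊥} of a surface M² ⊂ ℝ⁴ are simultaneously diagonalizable and satisfy the coassociative condition A^{Jν} = −J A^ν, then M² is totally geodesic, i.e. a plane.) -/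
/-- if symmetric real 2×2 matrices `A`, `B` satisfy `B = −J A`
(with `J = ((0,−1),(1,0))`) and commute (equivalently, are simultaneously
diagonalizable), then `A = B = 0`. -/
theorem stmt4 (A B : Matrix (Fin 2) (Fin 2) ℝ)
    (hA : A.IsSymm) (hB : B.IsSymm)
    (hJ : B = -(!![(0 : ℝ), -1; 1, 0]) * A)
    (hcomm : A * B = B * A) :
    A = 0 ∧ B = 0 := by
  have hAs := hA.apply 0 1
  have hBs := hB.apply 0 1
  have e00 := congrFun (congrFun hJ 0) 0
  have e01 := congrFun (congrFun hJ 0) 1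
  have e10 := congrFun (congrFun hJ 1) 0
  have e11 := congrFun (congrFun hJ 1) 1
  have c01 := congrFun (congrFun hcomm 0) 1
  simp [Matrix.mul_apply, Fin.sum_univ_two, Matrix.neg_apply, Matrix.cons_val_zero,
    Matrix.cons_val_one, Matrix.head_cons] at e00 e01 e10 e11 c01
  have h11 : A 1 1 = -A 0 0 := by rw [e10, e01] at hBs; linarith
  rw [e00, e01, e11, hAs, h11] at c01
  have hA00 : A 0 0 = 0 := by nlinarith [sq_nonneg (A 0 0), sq_nonneg (A 0 1)]
  have hA01 : A 0 1 = 0 := by nlinarith [sq_nonneg (A 0 0), sq_nonneg (A 0 1)]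
  have hA10 : A 1 0 = 0 := by rw [← hAs] at hA01; exact hA01
  have hA11 : A 1 1 = 0 := by rw [h11, hA00]; ring
  constructor
  · ext i j
    fin_cases i <;> fin_cases j <;> simp [hA00, hA01, hA10, hA11]
  · rw [hJ]
    ext i j
    fin_cases i <;> fin_cases j <;>
      simp [Matrix.mul_apply, Fin.sum_univ_two, hA00, hA01, hA10, hA11]
end

section
/- Let A¹ and A² be symmetric traceless real 2×2 matrices. Define W₁ = (A¹₁₁ − A¹₂₂, A²₁₁ − A²₂₂) ∈ ℝ², W₂ = (−2A¹₁₂, −2A²₁₂) ∈ ℝ², and the complex quartic form Q = (W₁·W₁ − W₂·W₂) + 2i (W₁·W₂) ∈ ℂ, where · is the Euclidean inner product on ℝ². Then Q = 0 if and only if A² = J A¹ or A² = −J A¹, where J = ((0, −1), (1, 0)). (Thus a minimal surface M² ⊂ ℝ⁴ is real isotropic, Q = 0, exactly when its second fundamental form satisfies A^{Jν} = +J A^ν for all normal ν or A^{Jν} = −J A^ν for all normal ν.) -/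
set_option maxHeartbeats 1000000 in
/-- for symmetric traceless real 2×2 matrices `A¹`, `A²`
(the second fundamental forms of a minimal surface `M² ⊂ ℝ⁴`), the complex
quartic form `Q = (W₁·W₁ − W₂·W₂) + 2i(W₁·W₂)` vanishes iff `A² = ±J A¹`,
i.e. iff the surface is real isotropic (superminimal). -/
theorem stmt6 (A1 A2 : Matrix (Fin 2) (Fin 2) ℝ)
    (hA1 : A1.IsSymm) (hA2 : A2.IsSymm)
    (htr1 : A1.trace = 0) (htr2 : A2.trace = 0) :
    (((dotProduct ![A1 0 0 - A1 1 1, A2 0 0 - A2 1 1] ![A1 0 0 - A1 1 1, A2 0 0 - A2 1 1]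
        - dotProduct ![-(2 * A1 0 1), -(2 * A2 0 1)] ![-(2 * A1 0 1), -(2 * A2 0 1)] : ℝ) : ℂ)
      + 2 * Complex.I *
        ((dotProduct ![A1 0 0 - A1 1 1, A2 0 0 - A2 1 1]
            ![-(2 * A1 0 1), -(2 * A2 0 1)] : ℝ) : ℂ) = 0) ↔
    (A2 = !![(0 : ℝ), -1; 1, 0] * A1 ∨ A2 = -(!![(0 : ℝ), -1; 1, 0]) * A1) := by
  have h1 : A1 1 0 = A1 0 1 := by
    have := congrFun (congrFun hA1 1) 0
    simpa [Matrix.transpose_apply] using this.symm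
  have h2 : A2 1 0 = A2 0 1 := by
    have := congrFun (congrFun hA2 1) 0
    simpa [Matrix.transpose_apply] using this.symm
  rw [Matrix.trace_fin_two] at htr1 htr2
  have t1 : A1 1 1 = -(A1 0 0) := by linarith
  have t2 : A2 1 1 = -(A2 0 0) := by linarith
  set a := A1 0 0 with ha
  set b := A1 0 1 with hb
  set c := A2 0 0 with hc
  set d := A2 0 1 with hd
  -- reduce the complex condition to two real equations
  have hQ : (((dotProduct ![a - A1 1 1, c - A2 1 1] ![a - A1 1 1, c - A2 1 1]
        - dotProduct ![-(2 * b), -(2 * d)] ![-(2 * b), -(2 * d)] : ℝ) : ℂ)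
      + 2 * Complex.I *
        ((dotProduct ![a - A1 1 1, c - A2 1 1] ![-(2 * b), -(2 * d)] : ℝ) : ℂ) = 0)
      ↔ (a ^ 2 + c ^ 2 = b ^ 2 + d ^ 2 ∧ a * b + c * d = 0) := by
    rw [t1, t2]
    simp only [dotProduct, Fin.sum_univ_two, Matrix.cons_val_zero, Matrix.cons_val_one,
      Matrix.head_cons]
    constructor
    · intro h
      have hre := congrArg Complex.re h
      have him := congrArg Complex.im h
      simp [Complex.add_im, Complex.add_re, Complex.mul_re, Complex.mul_im] at hre him
      constructor <;> nlinarith [hre, him]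
    · rintro ⟨h1', h2'⟩
      have e1 : ((a - -a) * (a - -a) + (c - -c) * (c - -c)
          - (-(2 * b) * -(2 * b) + -(2 * d) * -(2 * d)) : ℝ) = 0 := by nlinarith
      have e2 : ((a - -a) * -(2 * b) + (c - -c) * -(2 * d) : ℝ) = 0 := by nlinarith
      rw [e1, e2]
      simp
  -- reduce the matrix condition to entrywise equations
  have hM : (A2 = !![(0 : ℝ), -1; 1, 0] * A1 ∨ A2 = -(!![(0 : ℝ), -1; 1, 0]) * A1)
      ↔ ((c = -b ∧ d = a) ∨ (c = b ∧ d = -a)) := by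
    constructor
    · rintro (h | h)
      · left
        constructor
        · have := congrFun (congrFun h 0) 0
          simp [Matrix.mul_apply, Fin.sum_univ_two, h1, t1] at this
          linarith
        · have := congrFun (congrFun h 0) 1
          simp [Matrix.mul_apply, Fin.sum_univ_two, t1] at this
          linarith
      · right
        constructor
        · have := congrFun (congrFun h 0) 0
          simp [Matrix.mul_apply, Fin.sum_univ_two, h1, t1] at this
          linarith
        · have := congrFun (congrFun h 0) 1
          simp [Matrix.mul_apply, Fin.sum_univ_two, t1] at this
          linarith
    · rintro (⟨e1, e2⟩ | ⟨e1, e2⟩)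
      · left
        ext i j
        fin_cases i <;> fin_cases j <;>
          simp [Matrix.mul_apply, Fin.sum_univ_two, h1, h2, t1, t2] <;> linarith [e1, e2]
      · right
        ext i j
        fin_cases i <;> fin_cases j <;>
          simp [Matrix.mul_apply, Fin.sum_univ_two, h1, h2, t1, t2] <;> linarith [e1, e2]
  rw [hQ, hM]
  constructor
  · rintro ⟨hlen, horth⟩
    -- ((c+b)² + (d−a)²) * ((c−b)² + (d+a)²) = 0
    have key : ((c + b) ^ 2 + (d - a) ^ 2) * ((c - b) ^ 2 + (d + a) ^ 2) = 0 := by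
      nlinarith [sq_nonneg (a*d - b*c), sq_nonneg (a*b + c*d)]
    rcases mul_eq_zero.mp key with h | h
    · left
      constructor <;> nlinarith [sq_nonneg (c + b), sq_nonneg (d - a)]
    · right
      constructor <;> nlinarith [sq_nonneg (c - b), sq_nonneg (d + a)]
  · rintro (⟨e1, e2⟩ | ⟨e1, e2⟩) <;> rw [e1, e2] <;> constructor <;> ring
end

section
/- Let (a, b, c, d) be an oriented orthonormal basis of the quaternions ℍ ≅ ℝ⁴ (orthonormal with respect to ⟨x, y⟩ = Re(x̄ y), and with determinant +1 when the four quaternions are written in the basis 1, i, j, k). Then b̄ a = −d̄ c. Consequently, in the octonions the operators r_T(q) = (a𝐞)·((b𝐞)·q) and r_N(q) = (c𝐞)·((d𝐞)·q) on ℍ ⊂ 𝕆 satisfy r_N = −r_T, each squares to −id, and they determine the same decomposition of ℍ into two 2-dimensional eigenspaces. (This is the content of the lemma that the operator r_T = γ(e¹)γ(e²) on the negative spinor space S⁻ agrees, up to Clifford sign convention, with r_N = γ(ν¹)γ(ν²), so the eigenbundle decomposition S⁻|_M = V₊ⱼ ⊕ V₋ⱼ can be defined using either the tangent or the normal frame of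 the surface.) -/
/-!
The real part of `b̄a · c̄d` is a quadrilinear form in `(a, b, c, d)`: the Gram-matrix terms
`⟨a,b⟩⟨c,d⟩ + ⟨a,c⟩⟨b,d⟩ − ⟨a,d⟩⟨b,c⟩` minus the determinant of the coordinates. For an oriented
orthonormal basis it is therefore `−1`, i.e. the unit quaternions `b̄a` and `d̄c` have inner
product `−1`, so `b̄a = −d̄c`. On `ℍ ⊂ 𝕆` the operator `q ↦ (x𝐞)((y𝐞)q)` is right multiplication
by `−ȳx`, a unit imaginary quaternion when `x ⊥ y`, whose square is `−1`; everything else follows.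
-/

noncomputable section

/-- The octonions as pairs of quaternions, `𝕆 = ℍ × ℍ`. -/
abbrev Octo := Quaternion ℝ × Quaternion ℝ

/-- Cayley–Dickson multiplication `(a,b)·(c,d) = (ac − d̄b, da + bc̄)`. -/
def omul (x y : Octo) : Octo :=
  (x.1 * y.1 - star y.2 * x.2, y.2 * x.1 + x.2 * star y.1)

/-- The operator `q ↦ (a𝐞)·((b𝐞)·q)` on `ℍ ⊂ 𝕆`. -/
def rOp (a b : Quaternion ℝ) (q : Quaternion ℝ) : Quaternion ℝ :=
  (omul ((0 : Quaternion ℝ), a) (omul ((0 : Quaternion ℝ), b) (q, (0 : Quaternion ℝ)))).1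

namespace Quaternion

theorem re_star_mul_mul_star_mul (a b c d : ℍ[ℝ]) :
    (star b * a * (star c * d)).re =
      (star a * b).re * (star c * d).re + (star a * c).re * (star b * d).re
        - (star a * d).re * (star b * c).re
        - Matrix.det !![a.re, b.re, c.re, d.re;
                        a.imI, b.imI, c.imI, d.imI;
                        a.imJ, b.imJ, c.imJ, d.imJ;
                        a.imK, b.imK, c.imK, d.imK] := by
  simp [Matrix.det_succ_row_zero, Fin.sum_univ_succ, Fin.succAbove]
  ring

theorem mul_self_eq_neg_one {u : ℍ[ℝ]} (hre : u.re = 0) (hu : ‖u‖ = 1) : u * u = -1 := by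
  rw [← sq, sq_eq_neg_normSq.mpr hre, normSq_eq_norm_mul_self, hu, mul_one, coe_one]

theorem norm_star_mul {x y : ℍ[ℝ]} (hx : ‖x‖ = 1) (hy : ‖y‖ = 1) : ‖star x * y‖ = 1 := by
  rw [norm_mul, norm_star, hx, hy, mul_one]

end Quaternion

open Quaternion

theorem rOp_apply (x y q : ℍ[ℝ]) : rOp x y q = -(q * (star y * x)) := by
  simp [rOp, omul, star_mul, mul_assoc]

theorem rOp_rOp_eq_neg {x y : ℍ[ℝ]} (hx : ‖x‖ = 1) (hy : ‖y‖ = 1) (hxy : (star x * y).re = 0)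
    (q : ℍ[ℝ]) : rOp x y (rOp x y q) = -q := by
  have hre : (star y * x).re = 0 := by simpa [star_mul] using (re_star (star x * y)).trans hxy
  rw [rOp_apply, rOp_apply, neg_mul, neg_neg, mul_assoc,
    mul_self_eq_neg_one hre (norm_star_mul hy hx), mul_neg_one]

theorem star_mul_eq_neg_star_mul {a b c d : ℍ[ℝ]}
    (ha : ‖a‖ = 1) (hb : ‖b‖ = 1) (hc : ‖c‖ = 1) (hd : ‖d‖ = 1)
    (hbc : (star b * c).re = 0) (hbd : (star b * d).re = 0) (hcd : (star c * d).re = 0)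
    (hdet : Matrix.det !![a.re, b.re, c.re, d.re;
                          a.imI, b.imI, c.imI, d.imI;
                          a.imJ, b.imJ, c.imJ, d.imJ;
                          a.imK, b.imK, c.imK, d.imK] = 1) :
    star b * a = -(star d * c) := by
  have hinner : inner ℝ (star b * a) (star d * c) = -1 := by
    rw [inner_def, star_mul, star_star, re_star_mul_mul_star_mul, hbc, hbd, hcd, hdet]
    ring
  exact (inner_eq_neg_one_iff_of_norm_eq_one (norm_star_mul hb ha) (norm_star_mul hd hc)).mp hinner

theorem stmt12_general (a b c d : Quaternion ℝ)
    (ha : ‖a‖ = 1) (hb : ‖b‖ = 1) (hc : ‖c‖ = 1) (hd : ‖d‖ = 1)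
    (hab : (star a * b).re = 0)
    (hbc : (star b * c).re = 0) (hbd : (star b * d).re = 0) (hcd : (star c * d).re = 0)
    (hdet : Matrix.det !![a.re, b.re, c.re, d.re;
                          a.imI, b.imI, c.imI, d.imI;
                          a.imJ, b.imJ, c.imJ, d.imJ;
                          a.imK, b.imK, c.imK, d.imK] = 1) :
    star b * a = -(star d * c) ∧
    (∀ q : Quaternion ℝ, rOp c d q = -(rOp a b q)) ∧
    (∀ q : Quaternion ℝ, rOp a b (rOp a b q) = -q) ∧
    (∀ q : Quaternion ℝ, rOp c d (rOp c d q) = -q) ∧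
    ({q : Quaternion ℝ | rOp a b q = -(star b * a) * q}
      = {q : Quaternion ℝ | rOp c d q = -(-(star b * a) * q)}) ∧
    ({q : Quaternion ℝ | rOp a b q = -(-(star b * a) * q)}
      = {q : Quaternion ℝ | rOp c d q = -(star b * a) * q}) := by
  have hba := star_mul_eq_neg_star_mul ha hb hc hd hbc hbd hcd hdet
  have hrN (q : ℍ[ℝ]) : rOp c d q = -(rOp a b q) := by
    rw [rOp_apply, rOp_apply, hba, mul_neg, neg_neg]
  refine ⟨hba, hrN, rOp_rOp_eq_neg ha hb hab, rOp_rOp_eq_neg hc hd hcd, ?_, ?_⟩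
  · ext q
    simp only [Set.mem_ofPred_eq, hrN, neg_inj]
  · ext q
    simp only [Set.mem_ofPred_eq, hrN, neg_eq_iff_eq_neg]

/-- for an oriented orthonormal basis `(a,b,c,d)` of `ℍ ≅ ℝ⁴`,
one has `b̄a = −d̄c`; hence the operators `r_T(q) = (a𝐞)((b𝐞)q)` and
`r_N(q) = (c𝐞)((d𝐞)q)` satisfy `r_N = −r_T`, each squares to `−id`, and they
determine the same decomposition of `ℍ` into two 2-dimensional eigenspaces. -/
theorem stmt12 (a b c d : Quaternion ℝ)
    (ha : ‖a‖ = 1) (hb : ‖b‖ = 1) (hc : ‖c‖ = 1) (hd : ‖d‖ = 1)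
    (hab : (star a * b).re = 0) (hac : (star a * c).re = 0) (had : (star a * d).re = 0)
    (hbc : (star b * c).re = 0) (hbd : (star b * d).re = 0) (hcd : (star c * d).re = 0)
    (hdet : Matrix.det !![a.re, b.re, c.re, d.re;
                          a.imI, b.imI, c.imI, d.imI;
                          a.imJ, b.imJ, c.imJ, d.imJ;
                          a.imK, b.imK, c.imK, d.imK] = 1) :
    star b * a = -(star d * c) ∧
    (∀ q : Quaternion ℝ, rOp c d q = -(rOp a b q)) ∧
    (∀ q : Quaternion ℝ, rOp a b (rOp a b q) = -q) ∧
    (∀ q : Quaternion ℝ, rOp c d (rOp c d q) = -q) ∧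
    ({q : Quaternion ℝ | rOp a b q = -(star b * a) * q}
      = {q : Quaternion ℝ | rOp c d q = -(-(star b * a) * q)}) ∧
    ({q : Quaternion ℝ | rOp a b q = -(-(star b * a) * q)}
      = {q : Quaternion ℝ | rOp c d q = -(star b * a) * q}) :=
  stmt12_general a b c d ha hb hc hd hab hbc hbd hcd hdet
end
end

section
/- Let C ≠ 0 and K ≠ 0 be real numbers and define f : ℝ → ℝ by f(u) = (C/2)e^{Ku} + ((1 − K²)/(2CK²))e^{−Ku}. Then f satisfies the ordinary differential equation f(u)(1 + f′(u)²) = f″(u)(1 + f(u)²) for all u ∈ ℝ. (This ODE is exactly the condition for the surface (u, v, f(u)cos v, f(u)sin v) in ℝ⁴ to be minimal; the choice K = 1 recovers the holomorphic solution e^u.) -/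
/-!
Write `f = a e^{Ku} + b e^{-Ku}`. Then `f″ = K² f`, and `f′² - K² f² = -4abK²` is a first
integral. For the coefficients of `fSol` one has `4abK² = 1 - K²`, so `1 + f′² = K²(1 + f²)`;
multiplying by `f` and using `f″ = K² f` gives the equation.
-/

noncomputable section

/-- `f(u) = (C/2)e^{Ku} + ((1 − K²)/(2CK²))e^{−Ku}`. -/
def fSol (C K : ℝ) : ℝ → ℝ := fun u =>
  C / 2 * Real.exp (K * u) + (1 - K ^ 2) / (2 * C * K ^ 2) * Real.exp (-(K * u))

def expComb (a b K : ℝ) : ℝ → ℝ := fun u => a * Real.exp (K * u) + b * Real.exp (-(K * u))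

section expComb

variable (a b K : ℝ)

theorem hasDerivAt_expComb (u : ℝ) :
    HasDerivAt (expComb a b K) (K * expComb a (-b) K u) u := by
  have hexp : HasDerivAt (fun u => Real.exp (K * u)) (Real.exp (K * u) * K) u :=
    ((hasDerivAt_id u).const_mul K).exp.congr_deriv (by simp)
  have hexp_neg : HasDerivAt (fun u => Real.exp (-(K * u))) (Real.exp (-(K * u)) * -K) u :=
    ((hasDerivAt_id u).const_mul K).neg.exp.congr_deriv (by simp)
  exact ((hexp.const_mul a).add (hexp_neg.const_mul b)).congr_deriv (by unfold expComb; ring)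

theorem deriv_expComb : deriv (expComb a b K) = fun u => K * expComb a (-b) K u :=
  funext fun u => (hasDerivAt_expComb a b K u).deriv

theorem deriv_deriv_expComb :
    deriv (deriv (expComb a b K)) = fun u => K ^ 2 * expComb a b K u := by
  funext u
  rw [deriv_expComb, deriv_const_mul _ (hasDerivAt_expComb a (-b) K u).differentiableAt,
    (hasDerivAt_expComb a (-b) K u).deriv, neg_neg, sq, mul_assoc]

theorem expComb_neg_sq_sub_sq (u : ℝ) :
    expComb a (-b) K u ^ 2 - expComb a b K u ^ 2 = -4 * a * b := by
  have hexp : Real.exp (K * u) * Real.exp (-(K * u)) = 1 := by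
    rw [← Real.exp_add, add_neg_cancel, Real.exp_zero]
  simp only [expComb]
  linear_combination (-4 * a * b) * hexp

theorem expComb_ode (hab : 4 * a * b * K ^ 2 = 1 - K ^ 2) (u : ℝ) :
    expComb a b K u * (1 + deriv (expComb a b K) u ^ 2)
      = deriv (deriv (expComb a b K)) u * (1 + expComb a b K u ^ 2) := by
  rw [deriv_deriv_expComb, deriv_expComb]
  linear_combination (K ^ 2 * expComb a b K u) * expComb_neg_sq_sub_sq a b K u
    - expComb a b K u * hab

end expComb

/-- the explicit function `f` solves the ODE
`f(1 + (f′)²) = f″(1 + f²)`, which is the minimality condition for the surface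
`(u, v, f(u)cos v, f(u)sin v)` in `ℝ⁴`. -/
theorem stmt13 (C K : ℝ) (hC : C ≠ 0) (hK : K ≠ 0) (u : ℝ) :
    fSol C K u * (1 + (deriv (fSol C K) u) ^ 2)
      = deriv (deriv (fSol C K)) u * (1 + (fSol C K u) ^ 2) := by
  have hab : 4 * (C / 2) * ((1 - K ^ 2) / (2 * C * K ^ 2)) * K ^ 2 = 1 - K ^ 2 := by
    field_simp
    ring
  exact expComb_ode _ _ K hab u
end
end
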